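/- arXiv:2012.06033 — 7 statements merged into one kernel-verified Lean document; each statement's English description precedes it below -/
import Mathlib

section
/- Let g(x̃) = f(x̃) − x̃·Σ_i f_i(x̃) where f is given by mass-action kinetics on a reaction network with nonnegative-integer vertices. Then g is again given by mass-action kinetics; that is, for each i, every monomial with negative coefficient in g_i is divisible by x̃_i. -/
open MvPolynomial

/-!
At a monomial `m` with `m i = 0` the correction term `X i * ∑ j, F j` contributes nothing, so
the coefficient of `G i` equals that of `F i`. The only reactions contributing to it have source
complex `m`, hence source exponent `0` in species `i`, and so contribute `k e * e.2 i ≥ 0`.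
-/

namespace MvPolynomial

variable {σ R : Type*}

theorem coeff_X_mul_of_apply_eq_zero [CommSemiring R] {m : σ →₀ ℕ} {i : σ} (hm : m i = 0)
    (p : MvPolynomial σ R) : coeff m (X i * p) = 0 := by
  classical
  simp [coeff_X_mul', hm]

theorem coeff_C_mul_prod_X_pow [CommSemiring R] [Fintype σ] (m : σ →₀ ℕ) (c : R) (a : σ → ℕ) :
    coeff m (C c * ∏ j, X j ^ a j) = if ⇑m = a then c else 0 := by
  classical
  rw [coeff_C_mul, prod_X_pow, coeff_monomial]
  have hind : ⇑(Finsupp.indicator Finset.univ fun j _ ↦ a j) = a := by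
    ext j
    simp
  simp only [← DFunLike.coe_fn_eq, hind, eq_comm (a := a), mul_ite, mul_one, mul_zero]

theorem coeff_C_mul_sub_mul_prod_X_pow_nonneg [CommRing R] [PartialOrder R] [IsOrderedRing R]
    [Fintype σ] {m : σ →₀ ℕ} {i : σ} (hm : m i = 0) {c : R} (hc : 0 ≤ c) (a b : σ → ℕ) :
    0 ≤ coeff m (C (c * ((b i : R) - a i)) * ∏ j, X j ^ a j) := by
  rw [coeff_C_mul_prod_X_pow]
  split_ifs with hma
  · rw [← hma, hm, Nat.cast_zero, sub_zero]
    positivity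
  · exact le_rfl

end MvPolynomial

/-- If `F` is the mass-action vector field (as polynomials) of a reaction
network with nonnegative-integer vertices and positive rate constants, then the
relative-population field `G i = F i - X i * (∑ j, F j)` is again mass-action:
every monomial of `G i` with negative coefficient is divisible by `X i`. -/
theorem relative_population_is_mass_action
    (n : ℕ) (E : Finset ((Fin n → ℕ) × (Fin n → ℕ)))
    (k : ((Fin n → ℕ) × (Fin n → ℕ)) → ℝ)
    (hk : ∀ e ∈ E, 0 < k e)
    (F : Fin n → MvPolynomial (Fin n) ℝ)
    (hF : ∀ i, F i =
      ∑ e ∈ E, C (k e * ((e.2 i : ℝ) - (e.1 i : ℝ))) * ∏ j, (X j) ^ (e.1 j))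
    (G : Fin n → MvPolynomial (Fin n) ℝ)
    (hG : ∀ i, G i = F i - X i * ∑ j, F j) :
    ∀ i : Fin n, ∀ m : Fin n →₀ ℕ, (G i).coeff m < 0 → 1 ≤ m i := by
  intro i m hm
  by_contra! hmi
  replace hmi : m i = 0 := by omega
  have hG_nonneg : 0 ≤ (G i).coeff m := by
    rw [hG, coeff_sub, coeff_X_mul_of_apply_eq_zero hmi, sub_zero, hF, coeff_sum]
    exact Finset.sum_nonneg fun e he ↦
      coeff_C_mul_sub_mul_prod_X_pow_nonneg hmi (hk e he).le e.1 e.2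
  exact hG_nonneg.not_gt hm
end

section
/- For the single autocatalytic reaction X_i + X_j → X_i + X_j + X_l with rate constant κ (with i, j, l possibly equal), the relative-population vector field f(x̃)(Σ_r x̃_r) − x̃·Σ_r f_r(x̃) coincides with the mass-action vector field generated by the set of reactions { X_p + X_i + X_j → X_i + X_j + X_l : p ∈ {1,…,n}, p ≠ l }, all with rate constant κ. -/
/-- For the single autocatalytic reaction `X_i + X_j → X_i + X_j + X_l`
with rate `κ` (mass-action field `f x = (κ x_i x_j) • e_l`), the relative-population
field `(∑ r, x r) • f x - (∑ r, f x r) • x` coincides with the mass-action field of the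
reactions `{ X_p + X_i + X_j → X_i + X_j + X_l : p ≠ l }`, each with rate `κ`. -/
theorem relative_field_of_single_autocatalytic_reaction
    (n : ℕ) (i j l : Fin n) (κ : ℝ) (hκ : 0 < κ)
    (f : (Fin n → ℝ) → (Fin n → ℝ))
    (hf : ∀ x, f x = (κ * x i * x j) • (Pi.single l (1 : ℝ) : Fin n → ℝ)) :
    ∀ x : Fin n → ℝ,
      (∑ r, x r) • f x - (∑ r, f x r) • x =
        ∑ p ∈ Finset.univ.filter (· ≠ l),
          (κ * x p * x i * x j) •
            ((Pi.single l (1 : ℝ) : Fin n → ℝ) - Pi.single p (1 : ℝ)) := by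
  intro x
  rw [hf]
  funext k
  simp only [Pi.sub_apply, Pi.smul_apply, Finset.sum_apply, smul_eq_mul,
    Pi.single_apply]
  have h1 : (∑ r : Fin n, κ * x i * x j * if r = l then (1:ℝ) else 0)
      = κ * x i * x j := by
    simp [mul_ite]
  rw [h1]
  have hsum : ∑ p ∈ Finset.univ.filter (· ≠ l), x p = (∑ r, x r) - x l := by
    rw [eq_sub_iff_add_eq]
    rw [← Finset.sum_filter_add_sum_filter_not Finset.univ (· ≠ l) x]
    congr 1
    simp only [not_not]
    rw [Finset.filter_eq' Finset.univ l]
    simp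
  by_cases hk : k = l
  · subst hk
    simp only [eq_self_iff_true, if_true, if_pos, mul_one]
    have : ∀ p ∈ Finset.univ.filter (· ≠ k),
        κ * x p * x i * x j * ((1:ℝ) - if k = p then 1 else 0)
          = (κ * x i * x j) * x p := by
      intro p hp
      have : ¬ k = p := fun h => (Finset.mem_filter.mp hp).2 h.symm
      rw [if_neg this]; ring
    rw [Finset.sum_congr rfl this, ← Finset.mul_sum, hsum]
    ring
  · rw [if_neg hk]
    rw [Finset.sum_eq_single k
      (fun p hp hpk => by
        rw [if_neg (fun h => hpk h.symm)]; ring)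
      (fun h => absurd (Finset.mem_filter.mpr ⟨Finset.mem_univ k, hk⟩) h)]
    rw [if_pos rfl]
    ring
end

section
/- Every weakly reversible reaction network is endotactic. -/
/-- Along a chain whose start has value ≤ c and whose last element has value > c,
some step crosses the level c. -/
lemma chain_cross {α : Type*} (R : α → α → Prop) (f : α → ℝ) (c : ℝ) :
    ∀ (L : List α) (a : α), List.Chain R a L → f a ≤ c →
      c < f ((a :: L).getLast (by simp)) → ∃ x y, R x y ∧ f x ≤ c ∧ c < f y := by
  intro L
  induction L with
  | nil =>
    intro a _ h1 h2
    simp only [List.getLast_singleton] at h2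
    linarith
  | cons b L' ih =>
    intro a hch h1 h2
    rcases List.chain_cons.1 hch with ⟨hab, hch'⟩
    by_cases hb : c < f b
    · exact ⟨a, b, hab, h1, hb⟩
    · push_neg at hb
      apply ih b hch' hb
      rwa [List.getLast_cons (by simp)] at h2

/-- Every weakly reversible reaction network (every edge lies on a
directed cycle) is endotactic. -/
theorem weaklyReversible_is_endotactic
    (n : ℕ) (E : Finset ((Fin n → ℝ) × (Fin n → ℝ)))
    (hWR : ∀ e ∈ E, ∃ l : List (Fin n → ℝ),
      List.Chain (fun a b => (a, b) ∈ E) e.2 (l ++ [e.1])) :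
    ∀ w : Fin n → ℝ, ∀ e ∈ E, (∑ i, w i * (e.2 i - e.1 i)) < 0 →
      ∃ e' ∈ E, 0 < (∑ i, w i * (e'.2 i - e'.1 i)) ∧
        (∑ i, w i * e'.1 i) < (∑ i, w i * e.1 i) := by
  intro w e he hneg
  obtain ⟨l, hch⟩ := hWR e he
  set f : (Fin n → ℝ) → ℝ := fun v => ∑ i, w i * v i with hf
  have hsum : ∀ a b : Fin n → ℝ, (∑ i, w i * (b i - a i)) = f b - f a := by
    intro a b
    simp [hf, mul_sub, Finset.sum_sub_distrib]
  have h21 : f e.2 < f e.1 := by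
    rw [hsum] at hneg; linarith
  have hlast : (e.2 :: (l ++ [e.1])).getLast (by simp) = e.1 := by
    rw [List.getLast_cons (by simp)]
    simp
  obtain ⟨x, y, hxy, hx, hy⟩ :=
    chain_cross (fun a b => (a, b) ∈ E) f (f e.2) (l ++ [e.1]) e.2 hch le_rfl
      (by rw [hlast]; exact h21)
  refine ⟨(x, y), hxy, ?_, ?_⟩
  · rw [hsum]; simp only []; linarith
  · have : f x < f e.1 := lt_of_le_of_lt hx h21
    exact this
end

section
/- Let G be a reaction network whose vertices all lie in the convex hull of its source vertices. If G is not strongly endotactic, then there exists a proper face F of the convex hull of the source vertices such that every edge of G with source in F has its target in F. -/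
/-- If all vertices of `G` lie in the convex hull of its source vertices
and `G` is not strongly endotactic, then some proper face of that convex hull has the
property that every edge with source on the face has its target on the face. -/
theorem not_stronglyEndotactic_gives_trapping_face
    (n : ℕ) (E : Finset ((Fin n → ℝ) × (Fin n → ℝ)))
    (srcs : Set (Fin n → ℝ)) (hsrcs : srcs = {x | ∃ e ∈ E, e.1 = x})
    (C : Set (Fin n → ℝ)) (hC : C = convexHull ℝ srcs)
    (hvert : ∀ e ∈ E, e.1 ∈ C ∧ e.2 ∈ C)
    (hnSE : ¬ (∀ w : Fin n → ℝ, (∃ e ∈ E, (∑ i, w i * (e.2 i - e.1 i)) ≠ 0) →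
      ((∀ e ∈ E, (∀ e' ∈ E, (∑ i, w i * e.1 i) ≤ (∑ i, w i * e'.1 i)) →
          0 ≤ (∑ i, w i * (e.2 i - e.1 i))) ∧
        ∃ e ∈ E, (∀ e' ∈ E, (∑ i, w i * e.1 i) ≤ (∑ i, w i * e'.1 i)) ∧
          0 < (∑ i, w i * (e.2 i - e.1 i))))) :
    ∃ (w : Fin n → ℝ) (c : ℝ),
      (∀ x ∈ C, c ≤ (∑ i, w i * x i)) ∧
      (∃ x ∈ C, (∑ i, w i * x i) = c) ∧
      {x ∈ C | (∑ i, w i * x i) = c} ≠ C ∧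
      (∀ e ∈ E, (∑ i, w i * e.1 i) = c → (∑ i, w i * e.2 i) = c) := by
  push_neg at hnSE
  obtain ⟨w, ⟨e0, he0, he0ne⟩, hnQ⟩ := hnSE
  set f : (Fin n → ℝ) → ℝ := fun x => ∑ i, w i * x i with hf
  have hdiff : ∀ e : (Fin n → ℝ) × (Fin n → ℝ),
      (∑ i, w i * (e.2 i - e.1 i)) = f e.2 - f e.1 := by
    intro e
    simp [hf, mul_sub, Finset.sum_sub_distrib]
  have hlin : IsLinearMap ℝ f := by
    constructor
    · intro x y
      simp [hf, mul_add, Finset.sum_add_distrib]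
    · intro a x
      simp only [hf, Pi.smul_apply, smul_eq_mul, Finset.mul_sum]
      exact Finset.sum_congr rfl fun i _ => by ring
  have hEne : E.Nonempty := ⟨e0, he0⟩
  set c : ℝ := E.inf' hEne (fun e => f e.1) with hcdef
  have hcle : ∀ e ∈ E, c ≤ f e.1 := fun e he => Finset.inf'_le _ he
  obtain ⟨em, hem, hemeq⟩ := Finset.exists_mem_eq_inf' hEne (fun e => f e.1)
  -- c ≤ f x on C
  have hCle : ∀ x ∈ C, c ≤ f x := by
    intro x hx
    rw [hC] at hx
    have hsub : srcs ⊆ {y | c ≤ f y} := by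
      intro y hy
      rw [hsrcs] at hy
      obtain ⟨e, he, rfl⟩ := hy
      exact hcle e he
    have := convexHull_min hsub (convex_halfSpace_ge hlin c)
    exact this hx
  -- minimal edges go up
  have hA : ∀ e ∈ E, (∀ e' ∈ E, (∑ i, w i * e.1 i) ≤ (∑ i, w i * e'.1 i)) →
      0 ≤ (∑ i, w i * (e.2 i - e.1 i)) := by
    intro e he hmin
    rw [hdiff]
    have h1 : f e.1 ≤ c := by rw [hcdef, hemeq]; exact hmin em hem
    have h2 : c ≤ f e.2 := hCle _ (hvert e he).2
    linarith
  have hnB := hnQ hA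
  refine ⟨w, c, hCle, ⟨em.1, (hvert em hem).1, hemeq.symm⟩, ?_, ?_⟩
  · -- properness
    intro heq
    have h1 : f e0.1 = c := by
      have := heq ▸ (hvert e0 he0).1
      exact this.2
    have h2 : f e0.2 = c := by
      have := heq ▸ (hvert e0 he0).2
      exact this.2
    apply he0ne
    rw [hdiff, h1, h2, sub_self]
  · -- trapping
    intro e he heq
    have hmin : ∀ e' ∈ E, (∑ i, w i * e.1 i) ≤ (∑ i, w i * e'.1 i) := by
      intro e' he'
      exact le_trans (le_of_eq heq) (hcle e' he')
    have h1 := hA e he hmin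
    have h2 := hnB e he hmin
    rw [hdiff] at h1 h2
    have h3 : f e.2 = f e.1 := by linarith
    show f e.2 = c
    rw [h3]; exact heq
end

section
/- For each n ≥ 2, the reaction network G̃ on ℝⁿ with edges: for each i (indices cyclic mod n) and each p ≠ i, the edge e_p + 2e_i → 3e_i; and for each i and each p ≠ i+1, the edge e_p + 2e_i → 2e_i + e_{i+1}, is strongly endotactic. -/
/-!
Every source `e_p + 2e_i` pairs with `w` to `w p + 2 w i ≥ 3 min w`, and every reaction vector
has the form `e_j - e_p`. A `w`-minimal source therefore has `w p = min w`, so its reaction pairs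
nonnegatively with `w`. Some reaction pairs nonzero, so `w` is not constant, and going round the
cycle gives an `i` with `w i = min w < w (i + 1)`; the edge `3e_i → 2e_i + e_{i+1}` then has
minimal source and positive pairing.
-/

theorem Fin.forall_of_add_one_closed {n : ℕ} [NeZero n] {P : Fin n → Prop} {i₀ : Fin n}
    (h₀ : P i₀) (hsucc : ∀ i, P i → P (i + 1)) (j : Fin n) : P j := by
  obtain ⟨m, rfl⟩ := Nat.exists_eq_succ_of_ne_zero (NeZero.ne n)
  have key : ∀ k : Fin (m + 1), P (i₀ + k) := fun k =>
    Fin.induction (by simpa using h₀)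
      (fun k hk => by simpa [← Fin.coeSucc_eq_succ, add_assoc] using hsucc _ hk) k
  simpa using key (j - i₀)

theorem Fin.exists_min_lt_add_one {α : Type*} [LinearOrder α] {n : ℕ} [NeZero n]
    {w : Fin n → α} (hw : ∃ j k, w j ≠ w k) : ∃ i, (∀ j, w i ≤ w j) ∧ w i < w (i + 1) := by
  obtain ⟨i₀, hi₀⟩ := Finite.exists_min w
  by_contra! hstep
  have hconst : ∀ j, w j = w i₀ :=
    Fin.forall_of_add_one_closed (P := fun j => w j = w i₀) rfl fun i hi =>
      le_antisymm ((hstep i fun j => hi.le.trans (hi₀ j)).trans hi.le) (hi₀ _)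
  obtain ⟨j, k, hjk⟩ := hw
  exact hjk ((hconst j).trans (hconst k).symm)

section Pairings

variable {ι : Type*} [Fintype ι] [DecidableEq ι] (w : ι → ℝ) (p i : ι)

theorem pairings_of_dotProduct_target (y : ι → ℝ) {c : ℝ} (hy : w ⬝ᵥ y = c + 2 * w i) :
    ∑ k, w k * (Pi.single p (1:ℝ) + (2:ℝ) • Pi.single i (1:ℝ) : ι → ℝ) k = w p + 2 * w i ∧
      ∑ k, w k * (y k - (Pi.single p (1:ℝ) + (2:ℝ) • Pi.single i (1:ℝ) : ι → ℝ) k)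
        = c - w p := by
  show w ⬝ᵥ _ = _ ∧ w ⬝ᵥ (_ - _) = _
  have hsrc : w ⬝ᵥ (Pi.single p 1 + (2:ℝ) • Pi.single i 1) = w p + 2 * w i := by
    simp only [dotProduct_add, dotProduct_smul, dotProduct_single_one, smul_eq_mul]
  exact ⟨hsrc, by rw [dotProduct_sub, hy, hsrc]; ring⟩

theorem pairings_to_three_smul_single :
    ∑ k, w k * (Pi.single p (1:ℝ) + (2:ℝ) • Pi.single i (1:ℝ) : ι → ℝ) k = w p + 2 * w i ∧
      ∑ k, w k * ((3:ℝ) • Pi.single i (1:ℝ)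
        - (Pi.single p (1:ℝ) + (2:ℝ) • Pi.single i (1:ℝ)) : ι → ℝ) k = w i - w p :=
  pairings_of_dotProduct_target w p i _ <| by
    simp only [dotProduct_smul, dotProduct_single_one, smul_eq_mul]; ring

end Pairings

theorem pairings_to_two_smul_single_add_single {n : ℕ} [NeZero n] (w : Fin n → ℝ)
    (p i : Fin n) :
    ∑ k, w k * (Pi.single p (1:ℝ) + (2:ℝ) • Pi.single i (1:ℝ) : Fin n → ℝ) k
        = w p + 2 * w i ∧
      ∑ k, w k * ((2:ℝ) • Pi.single i (1:ℝ) + Pi.single (i + 1) (1:ℝ)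
        - (Pi.single p (1:ℝ) + (2:ℝ) • Pi.single i (1:ℝ)) : Fin n → ℝ) k = w (i + 1) - w p :=
  pairings_of_dotProduct_target w p i _ <| by
    simp only [dotProduct_add, dotProduct_smul, dotProduct_single_one, smul_eq_mul]; ring

def recombRepEdges (n : ℕ) [NeZero n] : Set ((Fin n → ℝ) × (Fin n → ℝ)) :=
  {e | ∃ i p : Fin n,
    (p ≠ i ∧ e = ((Pi.single p (1:ℝ) : Fin n → ℝ) + (2:ℝ) • (Pi.single i (1:ℝ) : Fin n → ℝ),
      (3:ℝ) • (Pi.single i (1:ℝ) : Fin n → ℝ))) ∨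
    (p ≠ i + 1 ∧ e = ((Pi.single p (1:ℝ) : Fin n → ℝ) + (2:ℝ) • (Pi.single i (1:ℝ) : Fin n → ℝ),
      (2:ℝ) • (Pi.single i (1:ℝ) : Fin n → ℝ) + Pi.single (i+1) (1:ℝ)))}

theorem exists_pairing_of_mem_recombRepEdges {n : ℕ} [NeZero n] (w : Fin n → ℝ)
    {e : (Fin n → ℝ) × (Fin n → ℝ)} (he : e ∈ recombRepEdges n) :
    ∃ i p j : Fin n, ∑ k, w k * e.1 k = w p + 2 * w i ∧
      ∑ k, w k * (e.2 k - e.1 k) = w j - w p := by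
  obtain ⟨i, p, ⟨-, rfl⟩ | ⟨-, rfl⟩⟩ := he
  exacts [⟨i, p, i, pairings_to_three_smul_single w p i⟩,
    ⟨i, p, i + 1, pairings_to_two_smul_single_add_single w p i⟩]

theorem recombn_rep_relative_network_stronglyEndotactic_general
    (n : ℕ) [NeZero n]
    (E : Set ((Fin n → ℝ) × (Fin n → ℝ)))
    (hE : E = {e | ∃ i p : Fin n,
      (p ≠ i ∧ e = ((Pi.single p (1:ℝ) : Fin n → ℝ) + (2:ℝ) • (Pi.single i (1:ℝ) : Fin n → ℝ),
                    (3:ℝ) • (Pi.single i (1:ℝ) : Fin n → ℝ))) ∨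
      (p ≠ i + 1 ∧ e = ((Pi.single p (1:ℝ) : Fin n → ℝ) + (2:ℝ) • (Pi.single i (1:ℝ) : Fin n → ℝ),
                    (2:ℝ) • (Pi.single i (1:ℝ) : Fin n → ℝ) + Pi.single (i+1) (1:ℝ)))}) :
    ∀ w : Fin n → ℝ, (∃ e ∈ E, (∑ i, w i * (e.2 i - e.1 i)) ≠ 0) →
      ((∀ e ∈ E, (∀ e' ∈ E, (∑ i, w i * e.1 i) ≤ (∑ i, w i * e'.1 i)) →
          0 ≤ (∑ i, w i * (e.2 i - e.1 i))) ∧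
        ∃ e ∈ E, (∀ e' ∈ E, (∑ i, w i * e.1 i) ≤ (∑ i, w i * e'.1 i)) ∧
          0 < (∑ i, w i * (e.2 i - e.1 i))) := by
  intro w ⟨e, he, hne⟩
  obtain rfl : E = recombRepEdges n := hE
  obtain ⟨i₀, hmin, hlt⟩ : ∃ i₀, (∀ j, w i₀ ≤ w j) ∧ w i₀ < w (i₀ + 1) := by
    obtain ⟨-, p, j, -, hreact⟩ := exists_pairing_of_mem_recombRepEdges w he
    exact Fin.exists_min_lt_add_one ⟨j, p, sub_ne_zero.1 (hreact ▸ hne)⟩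
  have he₀ : ((Pi.single i₀ (1:ℝ) : Fin n → ℝ) + (2:ℝ) • Pi.single i₀ (1:ℝ),
      (2:ℝ) • Pi.single i₀ (1:ℝ) + Pi.single (i₀ + 1) (1:ℝ)) ∈ recombRepEdges n :=
    ⟨i₀, i₀, .inr ⟨fun h => hlt.ne (congrArg w h), rfl⟩⟩
  obtain ⟨hsrc₀, hreact₀⟩ := pairings_to_two_smul_single_add_single w i₀ i₀
  refine ⟨fun e he hmin_e => ?_, _, he₀, fun e he => ?_, (sub_pos.2 hlt).trans_eq hreact₀.symm⟩
  · obtain ⟨i, p, j, hsrc, hreact⟩ := exists_pairing_of_mem_recombRepEdges w he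
    have hsrc_le := hmin_e _ he₀
    rw [hsrc, hsrc₀] at hsrc_le
    rw [hreact]
    linarith [hmin i, hmin p, hmin j]
  · obtain ⟨i, p, -, hsrc, -⟩ := exists_pairing_of_mem_recombRepEdges w he
    rw [hsrc, hsrc₀]
    linarith [hmin i, hmin p]

/-- For each `n ≥ 2`, the relative-population network
`G̃^rep_recomb(n)`, with edges `e_p + 2e_i → 3e_i` (`p ≠ i`) and
`e_p + 2e_i → 2e_i + e_{i+1}` (`p ≠ i+1`, indices cyclic), is strongly endotactic. -/
theorem recombn_rep_relative_network_stronglyEndotactic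
    (n : ℕ) [NeZero n] (hn : 2 ≤ n)
    (E : Set ((Fin n → ℝ) × (Fin n → ℝ)))
    (hE : E = {e | ∃ i p : Fin n,
      (p ≠ i ∧ e = ((Pi.single p (1:ℝ) : Fin n → ℝ) + (2:ℝ) • (Pi.single i (1:ℝ) : Fin n → ℝ),
                    (3:ℝ) • (Pi.single i (1:ℝ) : Fin n → ℝ))) ∨
      (p ≠ i + 1 ∧ e = ((Pi.single p (1:ℝ) : Fin n → ℝ) + (2:ℝ) • (Pi.single i (1:ℝ) : Fin n → ℝ),
                    (2:ℝ) • (Pi.single i (1:ℝ) : Fin n → ℝ) + Pi.single (i+1) (1:ℝ)))}) :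
    ∀ w : Fin n → ℝ, (∃ e ∈ E, (∑ i, w i * (e.2 i - e.1 i)) ≠ 0) →
      ((∀ e ∈ E, (∀ e' ∈ E, (∑ i, w i * e.1 i) ≤ (∑ i, w i * e'.1 i)) →
          0 ≤ (∑ i, w i * (e.2 i - e.1 i))) ∧
        ∃ e ∈ E, (∀ e' ∈ E, (∑ i, w i * e.1 i) ≤ (∑ i, w i * e'.1 i)) ∧
          0 < (∑ i, w i * (e.2 i - e.1 i))) :=
  recombn_rep_relative_network_stronglyEndotactic_general n E hE
end

section
/- Let G be a reaction network on species X₁,…,X_n whose reactions are all of the form 2X_i → 2X_i + X_j with j ≠ i, and suppose the production graph P(G) (vertices = species, edge X_i → X_j whenever 2X_i → 2X_i + X_j ∈ G) is strongly connected. Then the relative-population network G̃, consisting of reactions e_p + 2e_i → 2e_i + e_j for each reaction 2X_i → 2X_i + X_j of G and each p ≠ j, is strongly endotactic. -/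
/-- If `G` consists of reactions `2X_i → 2X_i + X_j` (`j ≠ i`), encoded
by the relation `R`, and its production graph is strongly connected, then the
relative-population network `G̃`, with edges `e_p + 2e_i → 2e_i + e_j` for every
`(i,j) ∈ R` and `p ≠ j`, is strongly endotactic. -/
theorem relative_network_of_strongly_connected_production_graph_stronglyEndotactic
    (n : ℕ) (R : Set (Fin n × Fin n))
    (hRne : ∀ r ∈ R, r.2 ≠ r.1)
    (hconn : ∀ a b : Fin n, Relation.ReflTransGen (fun i j => (i, j) ∈ R) a b)
    (E : Set ((Fin n → ℝ) × (Fin n → ℝ)))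
    (hE : E = {e | ∃ r ∈ R, ∃ p : Fin n, p ≠ r.2 ∧
      e = ((Pi.single p (1:ℝ) : Fin n → ℝ) + (2:ℝ) • (Pi.single r.1 (1:ℝ) : Fin n → ℝ),
           (2:ℝ) • (Pi.single r.1 (1:ℝ) : Fin n → ℝ) + Pi.single r.2 (1:ℝ))}) :
    ∀ w : Fin n → ℝ, (∃ e ∈ E, (∑ i, w i * (e.2 i - e.1 i)) ≠ 0) →
      ((∀ e ∈ E, (∀ e' ∈ E, (∑ i, w i * e.1 i) ≤ (∑ i, w i * e'.1 i)) →
          0 ≤ (∑ i, w i * (e.2 i - e.1 i))) ∧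
        ∃ e ∈ E, (∀ e' ∈ E, (∑ i, w i * e.1 i) ≤ (∑ i, w i * e'.1 i)) ∧
          0 < (∑ i, w i * (e.2 i - e.1 i))) := by
  subst hE
  intro w hw
  have hsingle : ∀ p : Fin n, (∑ k, w k * (Pi.single p (1:ℝ) : Fin n → ℝ) k) = w p := by
    intro p
    have h : ∀ k, w k * (Pi.single p (1:ℝ) : Fin n → ℝ) k = if k = p then w k else 0 := by
      intro k; by_cases h : k = p <;> simp [Pi.single_apply, h]
    rw [Finset.sum_congr rfl (fun k _ => h k)]
    simp
  have hsrc : ∀ p i : Fin n,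
      (∑ k, w k * ((Pi.single p (1:ℝ) : Fin n → ℝ) + (2:ℝ) • (Pi.single i (1:ℝ) : Fin n → ℝ)) k)
        = w p + 2 * w i := by
    intro p i
    have h : ∀ k, w k * (((Pi.single p (1:ℝ) : Fin n → ℝ) + (2:ℝ) • (Pi.single i (1:ℝ) : Fin n → ℝ)) k)
        = w k * (Pi.single p (1:ℝ) : Fin n → ℝ) k + 2 * (w k * (Pi.single i (1:ℝ) : Fin n → ℝ) k) := by
      intro k; simp [Pi.add_apply, Pi.smul_apply]; ring
    rw [Finset.sum_congr rfl (fun k _ => h k), Finset.sum_add_distrib, ← Finset.mul_sum,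
      hsingle, hsingle]
  have hdiff : ∀ p i j : Fin n,
      (∑ k, w k * (((2:ℝ) • (Pi.single i (1:ℝ) : Fin n → ℝ) + (Pi.single j (1:ℝ) : Fin n → ℝ)) k
        - ((Pi.single p (1:ℝ) : Fin n → ℝ) + (2:ℝ) • (Pi.single i (1:ℝ) : Fin n → ℝ)) k))
        = w j - w p := by
    intro p i j
    have h : ∀ k, w k * (((2:ℝ) • (Pi.single i (1:ℝ) : Fin n → ℝ) + (Pi.single j (1:ℝ) : Fin n → ℝ)) k
        - ((Pi.single p (1:ℝ) : Fin n → ℝ) + (2:ℝ) • (Pi.single i (1:ℝ) : Fin n → ℝ)) k)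
        = w k * (Pi.single j (1:ℝ) : Fin n → ℝ) k - w k * (Pi.single p (1:ℝ) : Fin n → ℝ) k := by
      intro k; simp [Pi.add_apply, Pi.smul_apply]; ring
    rw [Finset.sum_congr rfl (fun k _ => h k), Finset.sum_sub_distrib, hsingle, hsingle]
  obtain ⟨e0, he0, hne0⟩ := hw
  obtain ⟨r0, hr0, p0, hp00, he0eq⟩ := he0
  haveI : Nonempty (Fin n) := ⟨r0.1⟩
  obtain ⟨i₀, -, hmin'⟩ := Finset.exists_min_image Finset.univ w Finset.univ_nonempty
  have hmin : ∀ k : Fin n, w i₀ ≤ w k := fun k => hmin' k (Finset.mem_univ k)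
  set μ := w i₀ with hμ
  -- w is not constant: w p0 ≠ w r0.2
  have hne : w r0.2 ≠ w p0 := by
    subst he0eq
    dsimp only at hne0
    rw [hdiff] at hne0
    intro h; apply hne0; rw [h]; ring
  -- there is a vertex with strictly larger value
  have hv : ∃ v : Fin n, μ < w v := by
    rcases lt_or_gt_of_ne hne with h | h
    · exact ⟨p0, lt_of_le_of_lt (hmin r0.2) h⟩
    · exact ⟨r0.2, lt_of_le_of_lt (hmin p0) h⟩
  obtain ⟨v, hv⟩ := hv
  -- find an edge (x,y) ∈ R with w x = μ and μ < w y
  have key : ∀ a : Fin n,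
      Relation.ReflTransGen (fun i j => (i, j) ∈ R) a v → w a = μ →
      ∃ x y : Fin n, (x, y) ∈ R ∧ w x = μ ∧ μ < w y := by
    intro a hpath
    induction hpath using Relation.ReflTransGen.head_induction_on with
    | refl => intro ha; rw [ha] at hv; exact absurd hv (lt_irrefl μ)
    | @head a c hstep htail ih =>
        intro ha
        by_cases hc : w c = μ
        · exact ih hc
        · exact ⟨a, c, hstep, ha, lt_of_le_of_ne (hmin c) (Ne.symm hc)⟩
  obtain ⟨x, y, hxy, hx, hy⟩ := key i₀ (hconn i₀ v) rfl
  have hxney : x ≠ y := by intro h; rw [h] at hx; rw [hx] at hy; exact absurd hy (lt_irrefl μ)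
  -- the witness edge with p = x, i = x, j = y
  have hyx : y ≠ x := fun h => hxney h.symm
  have hstarmem : ((Pi.single x (1:ℝ) : Fin n → ℝ) + (2:ℝ) • (Pi.single x (1:ℝ) : Fin n → ℝ),
      (2:ℝ) • (Pi.single x (1:ℝ) : Fin n → ℝ) + Pi.single y (1:ℝ)) ∈
      {e : (Fin n → ℝ) × (Fin n → ℝ) | ∃ r ∈ R, ∃ p : Fin n, p ≠ r.2 ∧
      e = ((Pi.single p (1:ℝ) : Fin n → ℝ) + (2:ℝ) • (Pi.single r.1 (1:ℝ) : Fin n → ℝ),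
           (2:ℝ) • (Pi.single r.1 (1:ℝ) : Fin n → ℝ) + Pi.single r.2 (1:ℝ))} :=
    ⟨(x, y), hxy, x, hxney, rfl⟩
  have hstarval : (∑ k, w k *
      ((Pi.single x (1:ℝ) : Fin n → ℝ) + (2:ℝ) • (Pi.single x (1:ℝ) : Fin n → ℝ)) k)
      = 3 * μ := by rw [hsrc, hx]; ring
  -- every edge source value is at least 3μ
  have hlb : ∀ p i : Fin n,
      3 * μ ≤ w p + 2 * w i := by
    intro p i; have := hmin p; have := hmin i; linarith
  constructor
  · rintro e ⟨r, hr, p, hp, rfl⟩ hminE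
    have h1 := hminE _ hstarmem
    dsimp only at h1 ⊢
    rw [hsrc, hstarval] at h1
    have hwp : w p = μ := le_antisymm (by have := hmin r.1; linarith) (hmin p)
    rw [hdiff, hwp]
    have := hmin r.2
    linarith
  · refine ⟨_, hstarmem, ?_, ?_⟩
    · rintro e' ⟨r, hr, p, hp, rfl⟩
      dsimp only
      rw [hsrc, hsrc, hx]
      linarith [hlb p r.1]
    · dsimp only
      rw [hdiff, hx]
      linarith
end

section
/- Two mass-action systems generate the same dynamics, i.e. Σ_{s→s'∈E} k_{s→s'} x^s (s'−s) = Σ_{s→s'∈Ẽ} k̃_{s→s'} x^s (s'−s) as polynomial identities, if and only if at every source vertex the net reaction vectors agree, i.e. for every vertex s₀, Σ_{s₀→s'∈E} k_{s₀→s'}(s'−s₀) = Σ_{s₀→s'∈Ẽ} k̃_{s₀→s'}(s'−s₀). -/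
open MvPolynomial Finset

/-- Two mass-action systems generate the same dynamics if and only if at
every source vertex the net reaction vectors agree. -/
theorem dynamically_equivalent_iff_vertexwise
    (n : ℕ) (E E' : Finset ((Fin n → ℕ) × (Fin n → ℕ)))
    (k k' : ((Fin n → ℕ) × (Fin n → ℕ)) → ℝ)
    (hk : ∀ e ∈ E, 0 < k e) (hk' : ∀ e ∈ E', 0 < k' e) :
    (∀ x : Fin n → ℝ,
      (∑ e ∈ E, (k e * ∏ j, (x j) ^ (e.1 j)) •
        (fun i => (e.2 i : ℝ) - (e.1 i : ℝ))) =
      (∑ e ∈ E', (k' e * ∏ j, (x j) ^ (e.1 j)) •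
        (fun i => (e.2 i : ℝ) - (e.1 i : ℝ))))
    ↔
    (∀ s₀ : Fin n → ℕ,
      (∑ e ∈ E.filter (fun e => e.1 = s₀), (k e) •
        (fun i => (e.2 i : ℝ) - (e.1 i : ℝ))) =
      (∑ e ∈ E'.filter (fun e => e.1 = s₀), (k' e) •
        (fun i => (e.2 i : ℝ) - (e.1 i : ℝ)))) := by
  set toF : (Fin n → ℕ) → (Fin n →₀ ℕ) := fun s => Finsupp.equivFunOnFinite.symm s with htoF
  have toF_inj : Function.Injective toF := Finsupp.equivFunOnFinite.symm.injective
  constructor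
  · intro h s₀
    funext i
    -- polynomials
    set P : Finset ((Fin n → ℕ) × (Fin n → ℕ)) → (((Fin n → ℕ) × (Fin n → ℕ)) → ℝ) →
        MvPolynomial (Fin n) ℝ :=
      fun F c => ∑ e ∈ F, monomial (toF e.1) (c e * ((e.2 i : ℝ) - (e.1 i : ℝ))) with hP
    have heval : ∀ (F : Finset ((Fin n → ℕ) × (Fin n → ℕ)))
        (c : ((Fin n → ℕ) × (Fin n → ℕ)) → ℝ) (x : Fin n → ℝ),
        eval x (P F c) = ∑ e ∈ F, (c e * ∏ j, (x j) ^ (e.1 j)) * ((e.2 i : ℝ) - (e.1 i : ℝ)) := by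
      intro F c x
      rw [hP]
      simp only [map_sum, eval_monomial]
      refine Finset.sum_congr rfl fun e _ => ?_
      rw [Finsupp.prod_fintype _ _ (fun j => pow_zero (x j))]
      simp [toF]
      ring
    have hPQ : P E k = P E' k' := by
      apply MvPolynomial.funext
      intro x
      rw [heval, heval]
      have := congrFun (h x) i
      simp only [Finset.sum_apply, Pi.smul_apply, smul_eq_mul] at this
      exact this
    have hc := congrArg (coeff (toF s₀)) hPQ
    rw [hP] at hc
    simp only [coeff_sum, coeff_monomial] at hc
    have hconv : ∀ (F : Finset ((Fin n → ℕ) × (Fin n → ℕ)))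
        (c : ((Fin n → ℕ) × (Fin n → ℕ)) → ℝ),
        (∑ e ∈ F, if toF e.1 = toF s₀ then c e * ((e.2 i : ℝ) - (e.1 i : ℝ)) else 0) =
        ∑ e ∈ F.filter (fun e => e.1 = s₀), c e * ((e.2 i : ℝ) - (e.1 i : ℝ)) := by
      intro F c
      rw [Finset.sum_filter]
      refine Finset.sum_congr rfl fun e _ => ?_
      congr 1
      simp [toF_inj.eq_iff]
    rw [hconv, hconv] at hc
    simpa [Finset.sum_apply, Pi.smul_apply, smul_eq_mul] using hc
  · intro h x
    have key : ∀ (F : Finset ((Fin n → ℕ) × (Fin n → ℕ)))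
        (c : ((Fin n → ℕ) × (Fin n → ℕ)) → ℝ),
        F ⊆ E ∪ E' →
        (∑ e ∈ F, (c e * ∏ j, (x j) ^ (e.1 j)) • (fun i => (e.2 i : ℝ) - (e.1 i : ℝ))) =
        ∑ s₀ ∈ (E ∪ E').image Prod.fst, (∏ j, (x j) ^ (s₀ j)) •
          (∑ e ∈ F.filter (fun e => e.1 = s₀), (c e) • (fun i => (e.2 i : ℝ) - (e.1 i : ℝ))) := by
      intro F c hF
      rw [← Finset.sum_fiberwise_of_maps_to (g := Prod.fst) (t := (E ∪ E').image Prod.fst)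
        (fun e he => Finset.mem_image_of_mem _ (hF he))]
      refine Finset.sum_congr rfl fun s₀ _ => ?_
      rw [Finset.smul_sum]
      refine Finset.sum_congr rfl fun e he => ?_
      have : e.1 = s₀ := (Finset.mem_filter.mp he).2
      rw [this, mul_comm, mul_smul]
    rw [key E k Finset.subset_union_left, key E' k' Finset.subset_union_right]
    exact Finset.sum_congr rfl fun s₀ _ => by rw [h s₀]
end
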